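/- arXiv:2108.11991 — 5 statements merged into one kernel-verified Lean document; each statement's English description precedes it below -/
import Mathlib

section
/- A partition A of the cells of a network (with adjacency matrix M over commutative monoids) is balanced if and only if there exists a quotient matrix Q such that M·P = P·Q, where P is a characteristic matrix of A. -/
/-- Row `c` of the product `M·P`, where `P` is the characteristic matrix of the
coloring `A` and entries of `M` lie in a commutative monoid: entry `k` is the
monoid sum of `M c e` over the cells `e` of color `k`. -/
def rowMP {C K W : Type*} [Fintype C] [DecidableEq K] [AddCommMonoid W]
    (M : C → C → W) (A : C → K) (c : C) (k : K) : W :=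
  ∑ e : C, if A e = k then M c e else 0

/-- A partition `A` of the cells of a network (with adjacency matrix `M` over a
commutative monoid) is balanced iff there exists a quotient matrix `Q` such that
`M·P = P·Q`, where `P` is a characteristic matrix of `A`
(`(P·Q) c k = Q (A c) k`). -/
theorem balanced_iff_quotient_matrix {C : Type*} [Fintype C] {r : ℕ}
    {W : Type*} [AddCommMonoid W] (M : C → C → W) (A : C → Fin r)
    (hA : Function.Surjective A) :
    (∀ c d : C, A c = A d → ∀ k : Fin r, rowMP M A c k = rowMP M A d k) ↔
      ∃ Q : Fin r → Fin r → W, ∀ (c : C) (k : Fin r), rowMP M A c k = Q (A c) k := by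
  constructor
  · intro h
    refine ⟨fun j k => rowMP M A (Function.surjInv hA j) k, fun c k => ?_⟩
    exact h c (Function.surjInv hA (A c)) (Function.surjInv_eq hA (A c)).symm k
  · rintro ⟨Q, hQ⟩ c d hcd k
    rw [hQ, hQ, hcd]
end

section
/- If a partition ⋈ on a network G is balanced, then every G-admissible function f is ⋈-invariant, i.e. f maps the polydiagonal Δ_⋈ into itself: states synchronized according to ⋈ remain synchronized under f. -/
/-- An oracle component: a function giving the response of a cell (with internal
state `x`) to an arbitrary finite weighted input configuration, satisfying the
edge-merging axiom (inputs with merged weights `w̄ = wP` and merged states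
`x = P x̄`, for a surjective partition map `P`, give the same value) and the
zero-weight removal axiom. -/
def IsOracleComponent {X Y W : Type*} [AddCommMonoid W]
    (F : X → (n : ℕ) → (Fin n → W) → (Fin n → X) → Y) : Prop :=
  (∀ (x : X) (n r : ℕ) (P : Fin n → Fin r), Function.Surjective P →
    ∀ (w : Fin n → W) (wb : Fin r → W) (xb : Fin r → X),
      (∀ k : Fin r, wb k = ∑ i : Fin n, if P i = k then w i else 0) →
      F x n w (xb ∘ P) = F x r wb xb) ∧
  (∀ (x : X) (n : ℕ) (w : Fin (n + 1) → W) (xv : Fin (n + 1) → X) (i : Fin (n + 1)),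
      w i = 0 → F x (n + 1) w xv = F x n (w ∘ i.succAbove) (xv ∘ i.succAbove))

/-- If a partition `⋈` (coloring `A`) on a network `G` is balanced, then every
`G`-admissible function `f` (a restriction of an oracle component to the network)
is `⋈`-invariant: states synchronized according to `⋈` remain synchronized. -/
theorem balanced_implies_invariant {X Y W C K : Type} [AddCommMonoid W]
    [Fintype C] [DecidableEq K]
    (n : ℕ) (e : C ≃ Fin n) (M : C → C → W) (A : C → K)
    (hbal : ∀ c d : C, A c = A d → ∀ k : K,
      (∑ e' : C, if A e' = k then M c e' else 0) =
      (∑ e' : C, if A e' = k then M d e' else 0))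
    (F : X → (m : ℕ) → (Fin m → W) → (Fin m → X) → Y)
    (hF : IsOracleComponent F)
    (f : C → (C → X) → Y)
    (hf : ∀ (c : C) (x : C → X),
      f c x = F (x c) n (fun i => M c (e.symm i)) (fun i => x (e.symm i)))
    (x : C → X) (hx : ∀ c d : C, A c = A d → x c = x d) :
    ∀ c d : C, A c = A d → f c x = f d x := by
  classical
  intro c d hcd
  set S : Finset K := Finset.image A Finset.univ with hS
  have hmem : ∀ i : Fin n, A (e.symm i) ∈ S := fun i =>
    Finset.mem_image_of_mem A (Finset.mem_univ _)
  set P : Fin n → Fin S.card := fun i => S.equivFin ⟨A (e.symm i), hmem i⟩ with hP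
  have hrep : ∀ k : Fin S.card, ∃ a : C, A a = ((S.equivFin.symm k : S) : K) := by
    intro k
    obtain ⟨a, _, ha⟩ := Finset.mem_image.mp (S.equivFin.symm k).2
    exact ⟨a, ha⟩
  set rep : Fin S.card → C := fun k => (hrep k).choose with hrepdef
  have hrepA : ∀ k, A (rep k) = ((S.equivFin.symm k : S) : K) := fun k => (hrep k).choose_spec
  have hPk : ∀ (i : Fin n) (k : Fin S.card), P i = k ↔ A (e.symm i) = A (rep k) := by
    intro i k
    rw [hP]
    constructor
    · intro h
      have : (⟨A (e.symm i), hmem i⟩ : S) = S.equivFin.symm k := by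
        rw [← h, Equiv.symm_apply_apply]
      rw [hrepA k]
      exact congrArg Subtype.val this
    · intro h
      have : (⟨A (e.symm i), hmem i⟩ : S) = S.equivFin.symm k :=
        Subtype.ext (show A (e.symm i) = _ by rw [h]; exact hrepA k)
      show S.equivFin ⟨A (e.symm i), hmem i⟩ = k
      rw [this, Equiv.apply_symm_apply]
  have hPsurj : Function.Surjective P := by
    intro k
    refine ⟨e (rep k), ?_⟩
    rw [hPk]
    simp
  set xb : Fin S.card → X := fun k => x (rep k) with hxb
  have hxe : (fun i => x (e.symm i)) = xb ∘ P := by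
    funext i
    exact hx _ _ ((hPk i (P i)).mp rfl)
  set wb : C → Fin S.card → W := fun c0 k => ∑ i : Fin n, if P i = k then M c0 (e.symm i) else 0
    with hwb
  have key : ∀ c0 : C, F (x c0) n (fun i => M c0 (e.symm i)) (xb ∘ P)
      = F (x c0) S.card (wb c0) xb := fun c0 =>
    hF.1 (x c0) n S.card P hPsurj _ _ _ (fun k => rfl)
  have hw : ∀ (c0 : C) (k : Fin S.card),
      wb c0 k = ∑ e' : C, if A e' = A (rep k) then M c0 e' else 0 := by
    intro c0 k
    rw [hwb, ← Equiv.sum_comp e.symm (fun e' => if A e' = A (rep k) then M c0 e' else 0)]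
    exact Finset.sum_congr rfl fun i _ => by simp only [hPk i k]
  have hwbcd : wb c = wb d := by
    funext k
    rw [hw, hw, hbal c d hcd]
  calc f c x = F (x c) n (fun i => M c (e.symm i)) (xb ∘ P) := by rw [hf, hxe]
    _ = F (x c) S.card (wb c) xb := key c
    _ = F (x d) S.card (wb d) xb := by rw [hx c d hcd, hwbcd]
    _ = F (x d) n (fun i => M d (e.symm i)) (xb ∘ P) := (key d).symm
    _ = f d x := by rw [hf, hxe]
end

section
/- If G₁ = G₀/⋈₀₁ and G₂ = G₀/⋈₀₂ are two quotients of G₀ with ⋈₀₁ ≤ ⋈₀₂, then there is a balanced partition ⋈₁₂ on G₁ with G₂ = G₁/⋈₁₂ and P₀₂ = P₀₁P₁₂. In matrix terms: if M₀P₀₁ = P₀₁M₁, M₀P₀₂ = P₀₂M₂, and P₀₂ = P₀₁P₁₂ for a partition matrix P₁₂, then M₁P₁₂ = P₁₂M₂. -/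
/-- The product `M·P` where `P` is the characteristic matrix of the coloring `p`. -/
def mulP {C D W : Type*} [Fintype C] [DecidableEq D] [AddCommMonoid W]
    (M : C → C → W) (p : C → D) : C → D → W :=
  fun c k => ∑ e : C, if p e = k then M c e else 0

/-- The product `P·Q` where `P` is the characteristic matrix of the coloring `p`. -/
def pMul {C D W : Type*} (p : C → D) (Q : D → D → W) : C → D → W :=
  fun c k => Q (p c) k

/-- If `G₁ = G₀/⋈₀₁` and `G₂ = G₀/⋈₀₂` are two quotients of `G₀` with
`⋈₀₁ ≤ ⋈₀₂` (i.e. `P₀₂ = P₀₁P₁₂` for a partition matrix `P₁₂`), then `⋈₁₂` is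
balanced on `G₁` with `G₂ = G₁/⋈₁₂`: from `M₀P₀₁ = P₀₁M₁` and
`M₀P₀₂ = P₀₂M₂` it follows that `M₁P₁₂ = P₁₂M₂`. -/
theorem quotient_of_quotient {C₀ C₁ C₂ W : Type*}
    [Fintype C₀] [Fintype C₁] [Fintype C₂]
    [DecidableEq C₁] [DecidableEq C₂] [AddCommMonoid W]
    (M₀ : C₀ → C₀ → W) (M₁ : C₁ → C₁ → W) (M₂ : C₂ → C₂ → W)
    (p₀₁ : C₀ → C₁) (p₀₂ : C₀ → C₂) (p₁₂ : C₁ → C₂)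
    (h₀₁ : Function.Surjective p₀₁) (h₁₂ : Function.Surjective p₁₂)
    (hcomp : p₀₂ = p₁₂ ∘ p₀₁)
    (hb₀₁ : mulP M₀ p₀₁ = pMul p₀₁ M₁)
    (hb₀₂ : mulP M₀ p₀₂ = pMul p₀₂ M₂) :
    mulP M₁ p₁₂ = pMul p₁₂ M₂ := by
  funext c₁ k
  obtain ⟨c₀, rfl⟩ := h₀₁ c₁
  have h1 : ∀ d, M₁ (p₀₁ c₀) d = ∑ e : C₀, if p₀₁ e = d then M₀ c₀ e else 0 := by
    intro d
    have := congrFun (congrFun hb₀₁ c₀) d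
    simpa [mulP, pMul] using this.symm
  have h2 : M₂ (p₁₂ (p₀₁ c₀)) k = ∑ e : C₀, if p₁₂ (p₀₁ e) = k then M₀ c₀ e else 0 := by
    have := congrFun (congrFun hb₀₂ c₀) k
    simp only [mulP, pMul, hcomp, Function.comp] at this
    exact this.symm
  have h3 : ∀ (c : Prop) [Decidable c] (f : C₀ → W),
      (if c then ∑ e : C₀, f e else 0) = ∑ e : C₀, if c then f e else 0 := by
    intro c _ f; split <;> simp
  simp only [mulP, pMul, h1, h2, h3]
  rw [Finset.sum_comm]
  refine Finset.sum_congr rfl fun e _ => ?_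
  rw [Finset.sum_eq_single (p₀₁ e)]
  · by_cases h : p₁₂ (p₀₁ e) = k <;> simp [h]
  · intro b _ hb
    simp [Ne.symm hb]
  · simp
end

section
/- The join of two balanced partitions is balanced: given balanced partitions ⋈₁, ⋈₂ on a network G, the finest partition ⋈₃ coarser than both (the join in the partition lattice, generated by chains alternating between ⋈₁- and ⋈₂-classes) is balanced on G. -/
open scoped Classical

/-- A partition (equivalence relation) `s` is balanced on the network with
adjacency matrix `M` over a commutative monoid: equivalent cells have, for every
class (the class of any cell `e₀`), equal monoid sums of incoming weights from
that class. -/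
noncomputable def BalancedOn {C W : Type*} [Fintype C] [AddCommMonoid W]
    (M : C → C → W) (s : Setoid C) : Prop :=
  ∀ c d : C, s.r c d → ∀ e₀ : C,
    (∑ e : C, if s.r e e₀ then M c e else 0) =
    (∑ e : C, if s.r e e₀ then M d e else 0)

/-- Key step: if `s ≤ t` and `s` is balanced, then `s`-related cells have equal
sums over every `t`-class (each `t`-class is a union of `s`-classes). -/
theorem balanced_step {C W : Type*} [Fintype C] [AddCommMonoid W]
    (M : C → C → W) (s t : Setoid C) (hst : s ≤ t) (hs : BalancedOn M s) :
    ∀ c d : C, s.r c d → ∀ e₀ : C,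
      (∑ e : C, if t.r e e₀ then M c e else 0) =
      (∑ e : C, if t.r e e₀ then M d e else 0) := by
  intro c d hcd e₀
  have expand : ∀ f : C → W,
      (∑ e : C, if t.r e e₀ then f e else 0)
      = ∑ q : Quotient s, ∑ e : C,
          if Quotient.mk s e = q ∧ t.r e e₀ then f e else 0 := by
    intro f
    rw [Finset.sum_comm]
    refine Finset.sum_congr rfl fun e _ => ?_
    by_cases h : t.r e e₀ <;> simp [h]
  rw [expand (M c), expand (M d)]
  refine Finset.sum_congr rfl fun q _ => ?_
  by_cases hq : t.r q.out e₀
  · have heq : ∀ e : C, (Quotient.mk s e = q ∧ t.r e e₀) ↔ s.r e q.out := by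
      intro e
      constructor
      · rintro ⟨h1, -⟩
        have : Quotient.mk s e = Quotient.mk s q.out := by
          rw [h1, Quotient.out_eq]
        exact Quotient.eq.mp this
      · intro h
        refine ⟨?_, t.trans (hst h) hq⟩
        rw [← Quotient.out_eq q]
        exact Quotient.sound h
    calc (∑ e : C, if Quotient.mk s e = q ∧ t.r e e₀ then M c e else 0)
        = ∑ e : C, if s.r e q.out then M c e else 0 := by
          refine Finset.sum_congr rfl fun e _ => ?_
          rw [if_congr (heq e) rfl rfl]
      _ = ∑ e : C, if s.r e q.out then M d e else 0 := hs c d hcd q.out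
      _ = ∑ e : C, if Quotient.mk s e = q ∧ t.r e e₀ then M d e else 0 := by
          refine Finset.sum_congr rfl fun e _ => ?_
          rw [if_congr (heq e) rfl rfl]
  · have hnone : ∀ e : C, ¬(Quotient.mk s e = q ∧ t.r e e₀) := by
      rintro e ⟨h1, h2⟩
      apply hq
      have hs' : s.r e q.out := by
        refine Quotient.eq.mp ?_
        rw [h1, Quotient.out_eq]
      exact t.trans (t.symm (hst hs')) h2
    simp only [hnone, if_false]

/-- The join of two balanced partitions is balanced: the finest partition coarser
than both `⋈₁` and `⋈₂` (the join `⋈₁ ⊔ ⋈₂` in the lattice of equivalence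
relations, generated by alternating chains) is balanced. -/
theorem join_balanced {C W : Type*} [Fintype C] [AddCommMonoid W]
    (M : C → C → W) (s₁ s₂ : Setoid C)
    (h₁ : BalancedOn M s₁) (h₂ : BalancedOn M s₂) :
    BalancedOn M (s₁ ⊔ s₂) := by
  intro c d hcd e₀
  have hgen : Relation.EqvGen (fun x y => s₁.r x y ∨ s₂.r x y) c d := by
    have := Setoid.sup_eq_eqvGen s₁ s₂
    rw [this] at hcd
    exact hcd
  clear hcd
  induction hgen with
  | rel x y h =>
      cases h with
      | inl h => exact balanced_step M s₁ (s₁ ⊔ s₂) le_sup_left h₁ x y h e₀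
      | inr h => exact balanced_step M s₂ (s₁ ⊔ s₂) le_sup_right h₂ x y h e₀
  | refl x => rfl
  | symm x y _ ih => exact ih.symm
  | trans x y z _ _ ih₁ ih₂ => exact ih₁.trans ih₂
end

section
/- Each step of the coarsest-invariant-refinement iteration preserves balanced refinements: if ⋈ is a balanced partition with ⋈ ≤ A_i, and A_{i+1} is obtained from A_i by splitting each class of A_i according to equality of the rows of M·P_i (P_i the characteristic matrix of A_i), then ⋈ ≤ A_{i+1}. -/
/-- Each CIR iteration preserves balanced refinements: if `⋈` is balanced with
`⋈ ≤ Aᵢ`, and `Aᵢ₊₁` identifies `c, d` iff `Aᵢ c = Aᵢ d` and rows `c, d` of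
`M·Pᵢ` agree, then `⋈ ≤ Aᵢ₊₁`. -/
theorem cir_step_preserves_balanced {C Ki Kb W : Type*} [Fintype C]
    [DecidableEq Ki] [DecidableEq Kb] [AddCommMonoid W]
    (M : C → C → W) (Ai : C → Ki) (bowtie : C → Kb)
    (hbal : ∀ c d : C, bowtie c = bowtie d →
      ∀ k : Kb, rowMP M bowtie c k = rowMP M bowtie d k)
    (hle : ∀ c d : C, bowtie c = bowtie d → Ai c = Ai d) :
    ∀ c d : C, bowtie c = bowtie d →
      Ai c = Ai d ∧ ∀ k : Ki, rowMP M Ai c k = rowMP M Ai d k := by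
  intro c d h
  refine ⟨hle c d h, fun k => ?_⟩
  unfold rowMP
  rw [← Finset.sum_fiberwise_of_maps_to
      (g := bowtie) (t := Finset.univ.image bowtie)
      (fun e _ => Finset.mem_image_of_mem bowtie (Finset.mem_univ e))
      (fun e => if Ai e = k then M c e else 0),
    ← Finset.sum_fiberwise_of_maps_to
      (g := bowtie) (t := Finset.univ.image bowtie)
      (fun e _ => Finset.mem_image_of_mem bowtie (Finset.mem_univ e))
      (fun e => if Ai e = k then M d e else 0)]
  refine Finset.sum_congr rfl fun b hb => ?_
  obtain ⟨e0, -, he0⟩ := Finset.mem_image.mp hb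
  have key : ∀ e ∈ Finset.univ.filter (fun e => bowtie e = b), Ai e = Ai e0 :=
    fun e he => hle e e0 ((Finset.mem_filter.mp he).2.trans he0.symm)
  have step : ∀ x : C,
      (∑ e ∈ Finset.univ.filter (fun e => bowtie e = b),
        if Ai e = k then M x e else 0) =
      if Ai e0 = k then rowMP M bowtie x b else 0 := by
    intro x
    by_cases hk : Ai e0 = k
    · rw [if_pos hk, rowMP]
      conv_rhs => rw [← Finset.sum_filter]
      refine Finset.sum_congr rfl fun e he => if_pos ((key e he).trans hk)
    · rw [if_neg hk]
      exact Finset.sum_eq_zero fun e he =>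
        if_neg fun hc => hk ((key e he).symm.trans hc)
  rw [step c, step d, hbal c d h b]
end
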